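/- For n ≥ 2, let C > 0 be fixed. If the closure of the set {Ju : u ∈ W^{1,n}(ℝⁿ,ℝⁿ), ‖u‖_{W^{1,n}}ⁿ ≤ C‖Ju‖_{H¹}} contains a ball in H¹(ℝⁿ), then the set {∑_{j=1}^∞ λ^j Ju^j : ‖u^j‖_{W^{1,n}} ≤ 1 ∀j, ∑|λ^j| < ∞} is of the second category in H¹(ℝⁿ). -/

import Mathlib

open MeasureTheory Metric Filter
open scoped ENNReal Topology NNReal

noncomputable section

abbrev Euc (n : ℕ) := EuclideanSpace ℝ (Fin n)

/-- Jacobian determinant of `u : ℝⁿ → ℝⁿ`. -/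
def jacDet {n : ℕ} (u : Euc n → Euc n) (x : Euc n) : ℝ :=
  LinearMap.det (fderiv ℝ u x : Euc n →ₗ[ℝ] Euc n)

/-- Membership in the inhomogeneous Sobolev space `W^{1,q}(ℝⁿ,ℝⁿ)`. -/
def memW1 {n : ℕ} (q : ℝ) (u : Euc n → Euc n) : Prop :=
  Differentiable ℝ u ∧ MemLp u (ENNReal.ofReal q) volume ∧
    MemLp (fderiv ℝ u) (ENNReal.ofReal q) volume

/-- The `W^{1,q}` norm `(∫|u|^q + ∫|Du|^q)^{1/q}`. -/
def w1Norm {n : ℕ} (q : ℝ) (u : Euc n → Euc n) : ℝ :=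
  ((∫ x, ‖u x‖ ^ q) + ∫ x, ‖fderiv ℝ u x‖ ^ q) ^ q⁻¹

/-- The BMO seminorm (with values in `ℝ≥0∞`), via mean oscillation over balls. -/
def bmo {n : ℕ} (b : Euc n → ℝ) : ℝ≥0∞ :=
  ⨆ (x : Euc n) (r : {r : ℝ // 0 < r}),
    (volume (ball x (r : ℝ)))⁻¹ * ∫⁻ y in ball x (r : ℝ), ‖b y - ⨍ z in ball x (r : ℝ), b z‖₊

/-- The grand maximal-type function `sup_{t>0} |h * η_t|` (with values in `ℝ≥0∞`). -/
def hMax {n : ℕ} (η h : Euc n → ℝ) (x : Euc n) : ℝ≥0∞ :=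
  ⨆ t : {t : ℝ // 0 < t},
    ENNReal.ofReal |∫ y, h y * ((t : ℝ) ^ (-(n : ℝ)) * η ((t : ℝ)⁻¹ • (x - y)))|

/-- The Hardy space `H¹` norm associated to the mollifier `η`. -/
def hNorm {n : ℕ} (η h : Euc n → ℝ) : ℝ≥0∞ := ∫⁻ x, hMax η h x

/-- Membership in the Hardy space `H¹(ℝⁿ)`. -/
def memH1 {n : ℕ} (η h : Euc n → ℝ) : Prop :=
  Integrable h volume ∧ hNorm η h < ⊤

/-- `A` is nowhere dense in `H¹` (w.r.t. the `H¹` distance). -/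
def NwdH1 {n : ℕ} (η : Euc n → ℝ) (A : Set (Euc n → ℝ)) : Prop :=
  ∀ g, memH1 η g → ∀ ε : ℝ, 0 < ε → ∃ g', memH1 η g' ∧
    hNorm η (g' - g) < ENNReal.ofReal ε ∧
    ∃ ρ : ℝ, 0 < ρ ∧ ∀ f ∈ A, ENNReal.ofReal ρ ≤ hNorm η (f - g')

/-- `S` is of the second category in `H¹`: it is not a countable union of
nowhere dense subsets of `H¹`. -/
def SecondCategoryH1 {n : ℕ} (η : Euc n → ℝ) (S : Set (Euc n → ℝ)) : Prop :=
  ¬ ∃ F : ℕ → Set (Euc n → ℝ), (S ⊆ ⋃ k, F k) ∧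
    (∀ k, F k ⊆ {h | memH1 η h}) ∧ ∀ k, NwdH1 η (F k)

section AuxAll
variable {n : ℕ} {η : Euc n → ℝ}


instance : Nonempty {t : ℝ // 0 < t} := ⟨⟨1, one_pos⟩⟩

lemma ker_cont (hη : Continuous η) (t : ℝ) (x : Euc n) :
    Continuous fun y : Euc n => t ^ (-(n : ℝ)) * η (t⁻¹ • (x - y)) :=
  continuous_const.mul (hη.comp (by fun_prop))

lemma integ_ker (hη : Continuous η) (hηc : HasCompactSupport η)
    {f : Euc n → ℝ} (hf : Integrable f) (t : ℝ) (x : Euc n) :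
    Integrable (fun y => f y * (t ^ (-(n : ℝ)) * η (t⁻¹ • (x - y)))) := by
  obtain ⟨Sb, hSb⟩ := hηc.exists_bound_of_continuous hη
  have := hf.bdd_mul ((ker_cont hη t x).aestronglyMeasurable)
    (c := |t ^ (-(n : ℝ))| * Sb) (Eventually.of_forall fun y => by
      have := hSb (t⁻¹ • (x - y))
      simp only [Real.norm_eq_abs, abs_mul] at *
      exact mul_le_mul_of_nonneg_left this (abs_nonneg _))
  simpa [mul_comm] using this

lemma conv_cont (hη : Continuous η) (hηc : HasCompactSupport η)
    {f : Euc n → ℝ} (hf : Integrable f) (t : ℝ) :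
    Continuous fun x : Euc n => ∫ y, f y * (t ^ (-(n : ℝ)) * η (t⁻¹ • (x - y))) := by
  obtain ⟨Sb, hSb⟩ := hηc.exists_bound_of_continuous hη
  refine continuous_of_dominated (fun x => (hf.aestronglyMeasurable.mul
      ((ker_cont hη t x).aestronglyMeasurable)))
    (fun x => Eventually.of_forall fun y => ?_)
    (hf.norm.mul_const (|t ^ (-(n : ℝ))| * Sb)) ?_
  · have := hSb (t⁻¹ • (x - y))
    simp only [Real.norm_eq_abs, abs_mul] at *
    calc |f y| * (|t ^ (-(n:ℝ))| * |η (t⁻¹ • (x - y))|)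
        ≤ |f y| * (|t ^ (-(n:ℝ))| * Sb) := by
          exact mul_le_mul_of_nonneg_left (mul_le_mul_of_nonneg_left this (abs_nonneg _)) (abs_nonneg _)
      _ = |f y| * (|t ^ (-(n:ℝ))| * Sb) := rfl
  · refine Eventually.of_forall fun y => (continuous_const.mul
      (continuous_const.mul (hη.comp ?_))) 
    fun_prop

lemma hMax_meas (hη : Continuous η) (hηc : HasCompactSupport η)
    {f : Euc n → ℝ} (hf : Integrable f) : Measurable (hMax η f) := by
  apply LowerSemicontinuous.measurable
  apply lowerSemicontinuous_iSup
  intro t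
  exact (ENNReal.continuous_ofReal.comp
    (continuous_abs.comp (conv_cont hη hηc hf t))).lowerSemicontinuous

lemma hMax_add (hη : Continuous η) (hηc : HasCompactSupport η)
    {f g : Euc n → ℝ} (hf : Integrable f) (hg : Integrable g) (x : Euc n) :
    hMax η (fun y => f y + g y) x ≤ hMax η f x + hMax η g x := by
  refine iSup_le fun t => ?_
  have h1 : (∫ y, (f y + g y) * ((t:ℝ) ^ (-(n : ℝ)) * η ((t:ℝ)⁻¹ • (x - y))))
      = (∫ y, f y * ((t:ℝ) ^ (-(n : ℝ)) * η ((t:ℝ)⁻¹ • (x - y))))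
      + ∫ y, g y * ((t:ℝ) ^ (-(n : ℝ)) * η ((t:ℝ)⁻¹ • (x - y))) := by
    rw [← integral_add (integ_ker hη hηc hf t x) (integ_ker hη hηc hg t x)]
    simp [add_mul]
  rw [h1]
  refine le_trans (ENNReal.ofReal_le_ofReal (abs_add_le _ _)) ?_
  rw [ENNReal.ofReal_add (abs_nonneg _) (abs_nonneg _)]
  exact add_le_add (le_iSup (fun t : {t : ℝ // 0 < t} => ENNReal.ofReal
    |∫ y, f y * ((t:ℝ) ^ (-(n : ℝ)) * η ((t:ℝ)⁻¹ • (x - y)))|) t)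
    (le_iSup (fun t : {t : ℝ // 0 < t} => ENNReal.ofReal
    |∫ y, g y * ((t:ℝ) ^ (-(n : ℝ)) * η ((t:ℝ)⁻¹ • (x - y)))|) t)

lemma hNorm_add (hη : Continuous η) (hηc : HasCompactSupport η)
    {f g : Euc n → ℝ} (hf : Integrable f) (hg : Integrable g) :
    hNorm η (fun y => f y + g y) ≤ hNorm η f + hNorm η g := by
  calc hNorm η (fun y => f y + g y) ≤ ∫⁻ x, (hMax η f x + hMax η g x) :=
        lintegral_mono (hMax_add hη hηc hf hg)
    _ = hNorm η f + hNorm η g := lintegral_add_left (hMax_meas hη hηc hf) _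

lemma hMax_neg (f : Euc n → ℝ) : hMax η (fun y => - f y) = hMax η f := by
  funext x
  unfold hMax
  congr 1; funext t
  congr 1
  rw [← abs_neg, ← integral_neg]
  simp [neg_mul]

lemma hNorm_neg (f : Euc n → ℝ) : hNorm η (fun y => - f y) = hNorm η f := by
  unfold hNorm; rw [hMax_neg]

lemma hMax_smul (c : ℝ) (f : Euc n → ℝ) (x : Euc n) :
    hMax η (fun y => c * f y) x = ENNReal.ofReal |c| * hMax η f x := by
  unfold hMax
  rw [ENNReal.mul_iSup]
  congr 1; funext t
  rw [← ENNReal.ofReal_mul (abs_nonneg _), ← abs_mul, ← integral_const_mul]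
  simp [mul_assoc]

lemma hNorm_smul (c : ℝ) (f : Euc n → ℝ) :
    hNorm η (fun y => c * f y) = ENNReal.ofReal |c| * hNorm η f := by
  unfold hNorm
  simp_rw [hMax_smul]
  exact lintegral_const_mul' _ _ ENNReal.ofReal_ne_top

lemma hNorm_zero : hNorm η (fun _ => (0:ℝ)) = 0 := by
  have : hMax η (fun _ => (0:ℝ)) = fun _ => 0 := by
    funext x; unfold hMax; simp
  unfold hNorm; rw [this]; simp

lemma hNorm_congr {f g : Euc n → ℝ} (h : ∀ x, f x = g x) : hNorm η f = hNorm η g := by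
  have : f = g := funext h
  rw [this]
lemma hNorm_finsum (hη : Continuous η) (hηc : HasCompactSupport η)
    {w : ℕ → Euc n → ℝ} {s : Finset ℕ} (hw : ∀ j ∈ s, Integrable (w j)) :
    hNorm η (fun y => ∑ j ∈ s, w j y) ≤ ∑ j ∈ s, hNorm η (w j) := by
  induction s using Finset.induction with
  | empty => simp [hNorm_zero]
  | @insert a s' hj ih =>
    calc hNorm η (fun y => ∑ j ∈ insert a s', w j y)
        = hNorm η (fun y => w a y + ∑ j ∈ s', w j y) := by
          congr 1; funext y; rw [Finset.sum_insert hj]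
      _ ≤ hNorm η (w a) + hNorm η (fun y => ∑ j ∈ s', w j y) :=
          hNorm_add hη hηc (hw a (Finset.mem_insert_self a s'))
            (integrable_finset_sum _ fun j hjm => hw j (Finset.mem_insert_of_mem hjm))
      _ ≤ hNorm η (w a) + ∑ j ∈ s', hNorm η (w j) :=
          add_le_add_right (ih fun j hjm => hw j (Finset.mem_insert_of_mem hjm)) _
      _ = ∑ j ∈ insert a s', hNorm η (w j) := by rw [Finset.sum_insert hj]

lemma master (hη : Continuous η) (hηc : HasCompactSupport η)
    {w : ℕ → Euc n → ℝ} (hw : ∀ j, Integrable (w j))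
    {c β : ℕ → ℝ} (hc0 : ∀ j, 0 ≤ c j) (hβ0 : ∀ j, 0 ≤ β j)
    (hcI : ∀ j, (∫⁻ x, ‖w j x‖₊) ≤ ENNReal.ofReal (c j))
    (hβI : ∀ j, hNorm η (w j) ≤ ENNReal.ofReal (β j))
    (hcs : Summable c) (hβs : Summable β) :
    Integrable (fun x => ∑' j, w j x) ∧
    ∀ N, hNorm η (fun x => (∑' j, w j x) - ∑ j ∈ Finset.range N, w j x)
      ≤ ENNReal.ofReal (∑' j, β (j + N)) := by
  set h : Euc n → ℝ := fun x => ∑' j, w j x with hh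
  set p : ℕ → Euc n → ℝ := fun M x => ∑ j ∈ Finset.range M, w j x with hp
  have hpInt : ∀ M, Integrable (p M) := fun M => integrable_finset_sum _ fun j _ => hw j
  have hwm : ∀ j, AEMeasurable (fun x => (‖w j x‖₊ : ℝ≥0∞)) volume :=
    fun j => (hw j).aestronglyMeasurable.enorm
  have hTsum : (∫⁻ x, ∑' j, (‖w j x‖₊ : ℝ≥0∞)) ≠ ⊤ := by
    rw [lintegral_tsum hwm]
    refine ne_top_of_le_ne_top ?_ (ENNReal.tsum_le_tsum hcI)
    rw [← ENNReal.ofReal_tsum_of_nonneg hc0 hcs]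
    exact ENNReal.ofReal_ne_top
  have hae : ∀ᵐ x, (∑' j, (‖w j x‖₊ : ℝ≥0∞)) < ⊤ :=
    ae_lt_top' (AEMeasurable.ennreal_tsum hwm) hTsum
  have haes : ∀ᵐ x, Summable fun j => w j x := by
    filter_upwards [hae] with x hx
    have : Summable fun j => ‖w j x‖₊ := ENNReal.tsum_coe_ne_top_iff_summable.1 hx.ne
    exact Summable.of_nnnorm this
  have haesm : AEStronglyMeasurable h volume :=
    aestronglyMeasurable_of_tendsto_ae atTop (fun M => (hpInt M).aestronglyMeasurable)
      (haes.mono fun x hx => hx.hasSum.tendsto_sum_nat)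
  -- nnnorm bound on tails
  have htail_ae : ∀ N, ∀ᵐ x, (‖h x - p N x‖₊ : ℝ≥0∞) ≤ ∑' j, (‖w (j + N) x‖₊ : ℝ≥0∞) := by
    intro N
    filter_upwards [hae, haes] with x hx' hx
    have e1 : h x = ∑' j, w j x := rfl
    have e2 : p N x = ∑ j ∈ Finset.range N, w j x := rfl
    have h1 : h x - p N x = ∑' j, w (j + N) x := by
      have h2 := (Summable.sum_add_tsum_nat_add (f := fun j => w j x) N hx).symm
      rw [e1, e2]
      linarith [h2]
    rw [h1]
    have hsn : Summable fun j => ‖w (j + N) x‖ := by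
      have hs1 : Summable fun j => ‖w j x‖₊ := ENNReal.tsum_coe_ne_top_iff_summable.1 hx'.ne
      have hs2 : Summable fun j => ‖w j x‖ := by
        have := NNReal.summable_coe.2 hs1
        simpa [coe_nnnorm] using this
      exact (summable_nat_add_iff N).2 hs2
    calc (‖∑' j, w (j + N) x‖₊ : ℝ≥0∞) = ENNReal.ofReal ‖∑' j, w (j + N) x‖ :=
          (ofReal_norm _).symm
      _ ≤ ENNReal.ofReal (∑' j, ‖w (j + N) x‖) :=
          ENNReal.ofReal_le_ofReal (norm_tsum_le_tsum_norm hsn)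
      _ = ∑' j, ENNReal.ofReal ‖w (j + N) x‖ :=
          ENNReal.ofReal_tsum_of_nonneg (fun j => norm_nonneg _) hsn
      _ = ∑' j, (‖w (j + N) x‖₊ : ℝ≥0∞) := by
          simp only [← enorm_eq_nnnorm, ofReal_norm]
  have htailL1 : ∀ N, (∫⁻ x, ‖h x - p N x‖₊) ≤ ENNReal.ofReal (∑' j, c (j + N)) := by
    intro N
    calc (∫⁻ x, ‖h x - p N x‖₊) ≤ ∫⁻ x, ∑' j, (‖w (j + N) x‖₊ : ℝ≥0∞) :=
          lintegral_mono_ae (htail_ae N)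
      _ = ∑' j, ∫⁻ x, (‖w (j + N) x‖₊ : ℝ≥0∞) := lintegral_tsum fun j => hwm (j + N)
      _ ≤ ∑' j, ENNReal.ofReal (c (j + N)) := ENNReal.tsum_le_tsum fun j => hcI _
      _ = ENNReal.ofReal (∑' j, c (j + N)) :=
          (ENNReal.ofReal_tsum_of_nonneg (fun j => hc0 _) ((summable_nat_add_iff N).2 hcs)).symm
  have hInt : Integrable h := by
    refine ⟨haesm, ?_⟩
    have h0 := htailL1 0
    simp only [hp, Finset.range_zero, Finset.sum_empty, sub_zero] at h0
    exact lt_of_le_of_lt h0 ENNReal.ofReal_lt_top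
  obtain ⟨Sb, hSb⟩ := hηc.exists_bound_of_continuous hη
  have hctail : Tendsto (fun M => ∑' j, c (j + M)) atTop (𝓝 0) := tendsto_sum_nat_add c
  have hL1toReal : Tendsto (fun M => ∫ x, |h x - p M x|) atTop (𝓝 0) := by
    have hb : ∀ M, ∫ x, |h x - p M x| ≤ ∑' j, c (j + M) := by
      intro M
      have hInt2 : Integrable (fun x => h x - p M x) := hInt.sub (hpInt M)
      have he : ∫ x, |h x - p M x| = (∫⁻ x, ‖h x - p M x‖₊).toReal := by
        simp only [← enorm_eq_nnnorm]
        rw [← integral_norm_eq_lintegral_enorm hInt2.aestronglyMeasurable]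
        simp [Real.norm_eq_abs]
      rw [he]
      calc (∫⁻ x, ‖h x - p M x‖₊).toReal
          ≤ (ENNReal.ofReal (∑' j, c (j + M))).toReal :=
            ENNReal.toReal_mono ENNReal.ofReal_ne_top (htailL1 M)
        _ = ∑' j, c (j + M) := ENNReal.toReal_ofReal (tsum_nonneg fun j => hc0 _)
    exact squeeze_zero (fun M => integral_nonneg fun x => abs_nonneg _) hb hctail
  refine ⟨hInt, fun N => ?_⟩
  show hNorm η (fun x => h x - p N x) ≤ ENNReal.ofReal (∑' j, β (j + N))
  have key : ∀ x, hMax η (fun y => h y - p N y) x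
      ≤ liminf (fun M => hMax η (fun y => p M y - p N y) x) atTop := by
    intro x
    simp only [hMax]
    refine iSup_le fun t => ?_
    have hconv : Tendsto
        (fun M => ∫ y, (p M y - p N y) * ((t:ℝ) ^ (-(n:ℝ)) * η ((t:ℝ)⁻¹ • (x - y))))
        atTop (𝓝 (∫ y, (h y - p N y) * ((t:ℝ) ^ (-(n:ℝ)) * η ((t:ℝ)⁻¹ • (x - y))))) := by
      rw [tendsto_iff_norm_sub_tendsto_zero]
      have hb2 : ∀ M, ‖(∫ y, (p M y - p N y) * ((t:ℝ) ^ (-(n:ℝ)) * η ((t:ℝ)⁻¹ • (x - y))))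
          - ∫ y, (h y - p N y) * ((t:ℝ) ^ (-(n:ℝ)) * η ((t:ℝ)⁻¹ • (x - y)))‖
          ≤ (∫ y, |h y - p M y|) * (|(t:ℝ) ^ (-(n:ℝ))| * Sb) := by
        intro M
        have hi1 : Integrable (fun y => (p M y - p N y) * ((t:ℝ) ^ (-(n:ℝ)) * η ((t:ℝ)⁻¹ • (x - y)))) :=
          integ_ker hη hηc ((hpInt M).sub (hpInt N)) _ x
        have hi2 : Integrable (fun y => (h y - p N y) * ((t:ℝ) ^ (-(n:ℝ)) * η ((t:ℝ)⁻¹ • (x - y)))) :=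
          integ_ker hη hηc (hInt.sub (hpInt N)) _ x
        rw [← integral_sub hi1 hi2]
        have he2 : ∀ y, (p M y - p N y) * ((t:ℝ) ^ (-(n:ℝ)) * η ((t:ℝ)⁻¹ • (x - y)))
            - (h y - p N y) * ((t:ℝ) ^ (-(n:ℝ)) * η ((t:ℝ)⁻¹ • (x - y)))
            = (p M y - h y) * ((t:ℝ) ^ (-(n:ℝ)) * η ((t:ℝ)⁻¹ • (x - y))) := fun y => by ring
        simp_rw [he2]
        have hi3 : Integrable (fun y => (p M y - h y) * ((t:ℝ) ^ (-(n:ℝ)) * η ((t:ℝ)⁻¹ • (x - y)))) :=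
          integ_ker hη hηc ((hpInt M).sub hInt) _ x
        calc ‖∫ y, (p M y - h y) * ((t:ℝ) ^ (-(n:ℝ)) * η ((t:ℝ)⁻¹ • (x - y)))‖
            ≤ ∫ y, ‖(p M y - h y) * ((t:ℝ) ^ (-(n:ℝ)) * η ((t:ℝ)⁻¹ • (x - y)))‖ :=
              norm_integral_le_integral_norm _
          _ ≤ ∫ y, |h y - p M y| * (|(t:ℝ) ^ (-(n:ℝ))| * Sb) := by
              refine integral_mono hi3.norm ((hInt.sub (hpInt M)).abs.mul_const _) fun y => ?_
              simp only [Real.norm_eq_abs, abs_mul]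
              rw [abs_sub_comm (p M y) (h y)]
              refine mul_le_mul_of_nonneg_left ?_ (abs_nonneg _)
              exact mul_le_mul_of_nonneg_left
                (le_trans (le_abs_self _) (by simpa [Real.norm_eq_abs] using hSb ((t:ℝ)⁻¹ • (x - y))))
                (abs_nonneg _)
          _ = (∫ y, |h y - p M y|) * (|(t:ℝ) ^ (-(n:ℝ))| * Sb) := integral_mul_const _ _
      have hz : Tendsto (fun M => (∫ x, |h x - p M x|) * (|(t:ℝ) ^ (-(n:ℝ))| * Sb)) atTop (𝓝 0) := by
        simpa using hL1toReal.mul_const (|(t:ℝ) ^ (-(n:ℝ))| * Sb)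
      refine squeeze_zero (fun M => norm_nonneg _) ?_ hz
      intro M
      exact hb2 M
    have h3 : Tendsto (fun M => ENNReal.ofReal |∫ y, (p M y - p N y) * ((t:ℝ) ^ (-(n:ℝ)) * η ((t:ℝ)⁻¹ • (x - y)))|)
        atTop (𝓝 (ENNReal.ofReal |∫ y, (h y - p N y) * ((t:ℝ) ^ (-(n:ℝ)) * η ((t:ℝ)⁻¹ • (x - y)))|)) :=
      (ENNReal.continuous_ofReal.tendsto _).comp hconv.abs
    rw [← h3.liminf_eq]
    refine liminf_le_liminf (Eventually.of_forall fun M => ?_)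
    have hle : ENNReal.ofReal |∫ y, (p M y - p N y) * ((t:ℝ) ^ (-(n:ℝ)) * η ((t:ℝ)⁻¹ • (x - y)))|
        ≤ hMax η (fun y => p M y - p N y) x := by
      simp only [hMax]
      exact le_iSup (fun s : {s : ℝ // 0 < s} => ENNReal.ofReal
        |∫ y, (p M y - p N y) * ((s:ℝ) ^ (-(n:ℝ)) * η ((s:ℝ)⁻¹ • (x - y)))|) t
    exact hle
  calc hNorm η (fun x => h x - p N x)
      ≤ ∫⁻ x, liminf (fun M => hMax η (fun y => p M y - p N y) x) atTop := lintegral_mono key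
    _ ≤ liminf (fun M => hNorm η (fun y => p M y - p N y)) atTop :=
        lintegral_liminf_le fun M => hMax_meas hη hηc ((hpInt M).sub (hpInt N))
    _ ≤ ENNReal.ofReal (∑' j, β (j + N)) := by
        refine liminf_le_of_frequently_le' (Eventually.frequently (eventually_atTop.2 ⟨N, fun M hM => ?_⟩))
        have hdiff : (fun y => p M y - p N y) = fun y => ∑ j ∈ Finset.Ico N M, w j y := by
          funext y; rw [Finset.sum_Ico_eq_sub _ hM]
        rw [hdiff]
        calc hNorm η (fun y => ∑ j ∈ Finset.Ico N M, w j y)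
            ≤ ∑ j ∈ Finset.Ico N M, hNorm η (w j) := hNorm_finsum hη hηc fun j _ => hw j
          _ ≤ ∑ j ∈ Finset.Ico N M, ENNReal.ofReal (β j) := Finset.sum_le_sum fun j _ => hβI j
          _ = ENNReal.ofReal (∑ j ∈ Finset.Ico N M, β j) :=
              (ENNReal.ofReal_sum_of_nonneg fun j _ => hβ0 j).symm
          _ ≤ ENNReal.ofReal (∑' j, β (j + N)) := by
              refine ENNReal.ofReal_le_ofReal ?_
              rw [Finset.sum_Ico_eq_sum_range]
              have hrw : ∀ i, β (N + i) = β (i + N) := fun i => by rw [add_comm]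
              simp only [hrw]
              exact Summable.sum_le_tsum _ (fun j _ => hβ0 _) ((summable_nat_add_iff N).2 hβs)
lemma coord_le_norm (v : Euc n) (i : Fin n) : |v i| ≤ ‖v‖ := by
  rw [EuclideanSpace.norm_eq]
  have h1 : |v i| = Real.sqrt (‖v i‖ ^ 2) := by
    rw [Real.sqrt_sq_eq_abs]; simp [Real.norm_eq_abs]
  rw [h1]
  apply Real.sqrt_le_sqrt
  exact Finset.single_le_sum (f := fun j => ‖v j‖ ^ 2) (fun j _ => sq_nonneg _) (Finset.mem_univ i)

lemma det_abs_le (A : Euc n →L[ℝ] Euc n) :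
    |LinearMap.det (A : Euc n →ₗ[ℝ] Euc n)| ≤ (n.factorial : ℝ) * ‖A‖ ^ n := by
  classical
  set b := (EuclideanSpace.basisFun (Fin n) ℝ).toBasis with hb
  rw [← LinearMap.det_toMatrix b]
  rw [Matrix.det_apply]
  have hentry : ∀ i j, |LinearMap.toMatrix b b (A : Euc n →ₗ[ℝ] Euc n) i j| ≤ ‖A‖ := by
    intro i j
    rw [LinearMap.toMatrix_apply]
    have h2 : b.repr ((A : Euc n →ₗ[ℝ] Euc n) (b j)) i = (A (b j)) i := by
      simp [hb, OrthonormalBasis.coe_toBasis_repr_apply, EuclideanSpace.basisFun_repr]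
    rw [h2]
    calc |(A (b j)) i| ≤ ‖A (b j)‖ := coord_le_norm _ _
      _ ≤ ‖A‖ * ‖b j‖ := A.le_opNorm _
      _ = ‖A‖ := by
          have : ‖b j‖ = 1 := by
            simp [hb, OrthonormalBasis.coe_toBasis, EuclideanSpace.basisFun_apply,
              EuclideanSpace.norm_single]
          rw [this, mul_one]
  calc |∑ σ : Equiv.Perm (Fin n), Equiv.Perm.sign σ •
          ∏ i, LinearMap.toMatrix b b (A : Euc n →ₗ[ℝ] Euc n) (σ i) i|
      ≤ ∑ σ : Equiv.Perm (Fin n), |Equiv.Perm.sign σ •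
          ∏ i, LinearMap.toMatrix b b (A : Euc n →ₗ[ℝ] Euc n) (σ i) i| :=
        Finset.abs_sum_le_sum_abs _ _
    _ ≤ ∑ _σ : Equiv.Perm (Fin n), ‖A‖ ^ n := by
        refine Finset.sum_le_sum fun σ _ => ?_
        have hsign : |((Equiv.Perm.sign σ : ℤ) : ℝ)| = 1 := by
          rcases Int.units_eq_one_or (Equiv.Perm.sign σ) with h | h <;> simp [h]
        rw [Units.smul_def, zsmul_eq_mul, abs_mul]
        push_cast
        rw [hsign, one_mul]
        calc |∏ i, LinearMap.toMatrix b b (A : Euc n →ₗ[ℝ] Euc n) (σ i) i|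
            = ∏ i, |LinearMap.toMatrix b b (A : Euc n →ₗ[ℝ] Euc n) (σ i) i| :=
              Finset.abs_prod _ _
          _ ≤ ∏ _i : Fin n, ‖A‖ := Finset.prod_le_prod (fun i _ => abs_nonneg _)
              (fun i _ => hentry _ _)
          _ = ‖A‖ ^ n := by rw [Finset.prod_const, Finset.card_univ, Fintype.card_fin]
    _ = (n.factorial : ℝ) * ‖A‖ ^ n := by
        rw [Finset.sum_const, Finset.card_univ, Fintype.card_perm, Fintype.card_fin,
          nsmul_eq_mul]

lemma jacDet_measurable (u : Euc n → Euc n) : Measurable (jacDet u) := by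
  have h1 : Measurable (fun x => fderiv ℝ u x) := measurable_fderiv ℝ u
  exact (ContinuousLinearMap.continuous_det.measurable).comp h1

lemma w1Norm_nonneg (q : ℝ) (u : Euc n → Euc n) : 0 ≤ w1Norm q u :=
  Real.rpow_nonneg (by positivity) _

lemma integral_Du_le (hn : 2 ≤ n) {u : Euc n → Euc n} (h1 : w1Norm (n:ℝ) u ≤ 1) :
    (∫ x, ‖fderiv ℝ u x‖ ^ (n:ℝ)) ≤ 1 := by
  have hq0 : (n:ℝ) ≠ 0 := by positivity
  have hA : 0 ≤ ∫ x, ‖u x‖ ^ (n:ℝ) := integral_nonneg fun x => Real.rpow_nonneg (norm_nonneg _) _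
  have hB : 0 ≤ ∫ x, ‖fderiv ℝ u x‖ ^ (n:ℝ) :=
    integral_nonneg fun x => Real.rpow_nonneg (norm_nonneg _) _
  have hsum : (∫ x, ‖u x‖ ^ (n:ℝ)) + ∫ x, ‖fderiv ℝ u x‖ ^ (n:ℝ) ≤ 1 := by
    have h2 : ((((∫ x, ‖u x‖ ^ (n:ℝ)) + ∫ x, ‖fderiv ℝ u x‖ ^ (n:ℝ)) ^ ((n:ℝ))⁻¹) ^ (n:ℝ)) ≤ 1 :=
      Real.rpow_le_one (Real.rpow_nonneg (by linarith) _) h1 (by positivity)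
    rwa [Real.rpow_inv_rpow (by linarith) hq0] at h2
  linarith

lemma integrable_jacDet (hn : 2 ≤ n) {u : Euc n → Euc n} (hu : memW1 (n:ℝ) u) :
    Integrable (jacDet u) := by
  have hq0 : (ENNReal.ofReal (n:ℝ)) ≠ 0 := by
    simp only [ne_eq, ENNReal.ofReal_eq_zero, not_le]; positivity
  have hDn : Integrable (fun x => ‖fderiv ℝ u x‖ ^ (n:ℝ)) := by
    have := hu.2.2.integrable_norm_rpow hq0 ENNReal.ofReal_ne_top
    rwa [ENNReal.toReal_ofReal (by positivity)] at this
  refine Integrable.mono (hDn.const_mul (n.factorial : ℝ))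
    (jacDet_measurable u).aestronglyMeasurable (Eventually.of_forall fun x => ?_)
  have h1 := det_abs_le (fderiv ℝ u x)
  have h2 : ‖fderiv ℝ u x‖ ^ n = ‖fderiv ℝ u x‖ ^ (n:ℝ) := (Real.rpow_natCast _ n).symm
  simp only [Real.norm_eq_abs]
  rw [abs_of_nonneg (by positivity : (0:ℝ) ≤ (n.factorial:ℝ) * ‖fderiv ℝ u x‖ ^ (n:ℝ))]
  calc |jacDet u x| ≤ (n.factorial : ℝ) * ‖fderiv ℝ u x‖ ^ n := h1
    _ = (n.factorial : ℝ) * ‖fderiv ℝ u x‖ ^ (n:ℝ) := by rw [h2]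

lemma lintegral_jacDet (hn : 2 ≤ n) {u : Euc n → Euc n} (hu : memW1 (n:ℝ) u)
    (h1 : w1Norm (n:ℝ) u ≤ 1) :
    (∫⁻ x, ‖jacDet u x‖₊) ≤ ENNReal.ofReal (n.factorial : ℝ) := by
  have hq0 : (ENNReal.ofReal (n:ℝ)) ≠ 0 := by
    simp only [ne_eq, ENNReal.ofReal_eq_zero, not_le]; positivity
  have hDn : Integrable (fun x => ‖fderiv ℝ u x‖ ^ (n:ℝ)) := by
    have := hu.2.2.integrable_norm_rpow hq0 ENNReal.ofReal_ne_top
    rwa [ENNReal.toReal_ofReal (by positivity)] at this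
  calc (∫⁻ x, ‖jacDet u x‖₊)
      ≤ ∫⁻ x, ENNReal.ofReal ((n.factorial : ℝ) * ‖fderiv ℝ u x‖ ^ (n:ℝ)) := by
        refine lintegral_mono fun x => ?_
        rw [← enorm_eq_nnnorm, ← ofReal_norm, Real.norm_eq_abs]
        refine ENNReal.ofReal_le_ofReal ?_
        calc |jacDet u x| ≤ (n.factorial : ℝ) * ‖fderiv ℝ u x‖ ^ n := det_abs_le _
          _ = (n.factorial : ℝ) * ‖fderiv ℝ u x‖ ^ (n:ℝ) := by rw [Real.rpow_natCast]
    _ = ENNReal.ofReal (∫ x, (n.factorial : ℝ) * ‖fderiv ℝ u x‖ ^ (n:ℝ)) :=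
        (ofReal_integral_eq_lintegral_ofReal (hDn.const_mul _)
          (Eventually.of_forall fun x => by positivity)).symm
    _ ≤ ENNReal.ofReal (n.factorial : ℝ) := by
        refine ENNReal.ofReal_le_ofReal ?_
        rw [integral_const_mul]
        calc (n.factorial : ℝ) * ∫ x, ‖fderiv ℝ u x‖ ^ (n:ℝ)
            ≤ (n.factorial : ℝ) * 1 :=
              mul_le_mul_of_nonneg_left (integral_Du_le hn h1) (by positivity)
          _ = (n.factorial : ℝ) := mul_one _

lemma jacDet_smul (c : ℝ) {u : Euc n → Euc n} (hu : Differentiable ℝ u) (x : Euc n) :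
    jacDet (fun y => c • u y) x = c ^ n * jacDet u x := by
  unfold jacDet
  rw [fderiv_fun_const_smul (hu x) c, ContinuousLinearMap.coe_smul, LinearMap.det_smul,
    finrank_euclideanSpace_fin]

lemma memW1_smul (c : ℝ) {u : Euc n → Euc n} (hu : memW1 (n:ℝ) u) :
    memW1 (n:ℝ) (fun y => c • u y) := by
  refine ⟨hu.1.const_smul c, hu.2.1.const_smul c, ?_⟩
  have h1 : (fun x => fderiv ℝ (fun y => c • u y) x) = fun x => c • fderiv ℝ u x :=
    funext fun x => fderiv_fun_const_smul (hu.1 x) c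
  show MemLp (fun x => fderiv ℝ (fun y => c • u y) x) (ENNReal.ofReal (n:ℝ)) volume
  rw [h1]
  exact hu.2.2.const_smul c

lemma w1Norm_smul (hn : 2 ≤ n) (c : ℝ) {u : Euc n → Euc n} (hu : Differentiable ℝ u) :
    w1Norm (n:ℝ) (fun y => c • u y) = |c| * w1Norm (n:ℝ) u := by
  have hq0 : (n:ℝ) ≠ 0 := by positivity
  have hA : 0 ≤ ∫ x, ‖u x‖ ^ (n:ℝ) := integral_nonneg fun x => Real.rpow_nonneg (norm_nonneg _) _
  have hB : 0 ≤ ∫ x, ‖fderiv ℝ u x‖ ^ (n:ℝ) :=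
    integral_nonneg fun x => Real.rpow_nonneg (norm_nonneg _) _
  unfold w1Norm
  have h1 : ∀ x, ‖c • u x‖ ^ (n:ℝ) = |c| ^ (n:ℝ) * ‖u x‖ ^ (n:ℝ) := fun x => by
    rw [norm_smul, Real.mul_rpow (norm_nonneg _) (norm_nonneg _), Real.norm_eq_abs]
  have h2 : ∀ x, ‖fderiv ℝ (fun y => c • u y) x‖ ^ (n:ℝ) = |c| ^ (n:ℝ) * ‖fderiv ℝ u x‖ ^ (n:ℝ) := by
    intro x
    rw [fderiv_fun_const_smul (hu x) c, norm_smul, Real.mul_rpow (norm_nonneg _) (norm_nonneg _),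
      Real.norm_eq_abs]
  simp_rw [h1, h2]
  rw [integral_const_mul, integral_const_mul, ← mul_add,
    Real.mul_rpow (Real.rpow_nonneg (abs_nonneg _) _) (by linarith)]
  rw [← Real.rpow_mul (abs_nonneg c), mul_inv_cancel₀ hq0, Real.rpow_one]

lemma two_lemma {n : ℕ} (hn : 2 ≤ n) {C : ℝ} (hC : 0 < C)
    {η : Euc n → ℝ} (hη : Continuous η) (hηc : HasCompactSupport η)
    {h₀ : Euc n → ℝ} {ε : ℝ} (hε : 0 < ε) (hh₀ : memH1 η h₀)
    (happrox : ∀ g, memH1 η g → hNorm η (g - h₀) < ENNReal.ofReal ε →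
        ∀ δ : ℝ, 0 < δ → ∃ u : Euc n → Euc n, memW1 (n : ℝ) u ∧
          w1Norm (n : ℝ) u ^ (n : ℝ) ≤ C * (hNorm η (jacDet u)).toReal ∧
          hNorm η (g - jacDet u) < ENNReal.ofReal δ)
    {W B : ℝ} (hW : W = (hNorm η h₀).toReal + ε + 1)
    (hB : B = (C * W) ^ ((n:ℝ))⁻¹ + 1)
    (d : Euc n → ℝ) (hd : memH1 η d) (δ : ℝ) (hδ : 0 < δ) :
    ∃ (a : ℝ) (v₁ v₂ : Euc n → Euc n),
      memW1 (n:ℝ) v₁ ∧ w1Norm (n:ℝ) v₁ ≤ 1 ∧ memW1 (n:ℝ) v₂ ∧ w1Norm (n:ℝ) v₂ ≤ 1 ∧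
      0 < a ∧ a = ((hNorm η d).toReal + δ) / ε * B ^ n ∧
      hNorm η (fun x => d x - (a * jacDet v₁ x + (- a) * jacDet v₂ x)) < ENNReal.ofReal δ ∧
      hNorm η (fun x => a * jacDet v₁ x)
        ≤ ENNReal.ofReal (((hNorm η d).toReal + δ) / ε * W) ∧
      hNorm η (fun x => (- a) * jacDet v₂ x)
        ≤ ENNReal.ofReal (((hNorm η d).toReal + δ) / ε * W) := by
  have hWpos : 0 < W := by
    rw [hW]; positivity
  have hBpos : 0 < B := by
    rw [hB]; positivity
  set t : ℝ := ((hNorm η d).toReal + δ) / ε with ht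
  have htpos : 0 < t := by
    rw [ht]; positivity
  have hdne : hNorm η d ≠ ⊤ := hd.2.ne
  have hdlt : hNorm η d < ENNReal.ofReal (t * ε) := by
    have : t * ε = (hNorm η d).toReal + δ := by
      rw [ht, div_mul_cancel₀ _ hε.ne']
    calc hNorm η d = ENNReal.ofReal ((hNorm η d).toReal) := (ENNReal.ofReal_toReal hdne).symm
      _ < ENNReal.ofReal (t * ε) := by
          rw [this]
          exact (ENNReal.ofReal_lt_ofReal_iff_of_nonneg ENNReal.toReal_nonneg).2 (by linarith)
  -- rescaled difference
  set d' : Euc n → ℝ := fun x => t⁻¹ * d x with hd'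
  have hd'norm : hNorm η d' < ENNReal.ofReal ε := by
    rw [hd', hNorm_smul]
    calc ENNReal.ofReal |t⁻¹| * hNorm η d
        < ENNReal.ofReal |t⁻¹| * ENNReal.ofReal (t * ε) := by
          refine ENNReal.mul_lt_mul_right ?_ ?_ hdlt
          · simp only [ne_eq, ENNReal.ofReal_eq_zero, not_le]
            exact abs_pos.2 (inv_ne_zero htpos.ne')
          · exact ENNReal.ofReal_ne_top
      _ = ENNReal.ofReal ε := by
          rw [← ENNReal.ofReal_mul (abs_nonneg _), abs_of_pos (inv_pos.2 htpos)]
          congr 1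
          field_simp
  have hd'int : Integrable d' := hd.1.const_mul _
  set gp : Euc n → ℝ := fun x => h₀ x + d' x with hgp
  have hgpint : Integrable gp := hh₀.1.add hd'int
  have hgpnorm : hNorm η gp ≤ hNorm η h₀ + ENNReal.ofReal ε := by
    calc hNorm η gp ≤ hNorm η h₀ + hNorm η d' := hNorm_add hη hηc hh₀.1 hd'int
      _ ≤ hNorm η h₀ + ENNReal.ofReal ε := add_le_add_right hd'norm.le _
  have hgpmem : memH1 η gp := ⟨hgpint, lt_of_le_of_lt hgpnorm
    (by
      rw [← ENNReal.ofReal_toReal hh₀.2.ne]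
      exact lt_of_le_of_lt (le_of_eq (ENNReal.ofReal_add ENNReal.toReal_nonneg hε.le).symm)
        ENNReal.ofReal_lt_top)⟩
  have hgpball : hNorm η (gp - h₀) < ENNReal.ofReal ε := by
    have : hNorm η (gp - h₀) = hNorm η d' :=
      hNorm_congr fun x => by simp [hgp, Pi.sub_apply]
    rw [this]; exact hd'norm
  have hh₀ball : hNorm η (h₀ - h₀) < ENNReal.ofReal ε := by
    have : hNorm η (h₀ - h₀) = hNorm η (fun _ => (0:ℝ)) :=
      hNorm_congr fun x => by simp
    rw [this, hNorm_zero]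
    exact ENNReal.ofReal_pos.2 hε
  set δ₁ : ℝ := min (δ / (4 * t)) 1 with hδ₁
  have hδ₁pos : 0 < δ₁ := lt_min (by positivity) one_pos
  have hδ₁le1 : δ₁ ≤ 1 := min_le_right _ _
  obtain ⟨u₁, hu₁mem, hu₁bound, hu₁app⟩ := happrox gp hgpmem hgpball δ₁ hδ₁pos
  obtain ⟨u₂, hu₂mem, hu₂bound, hu₂app⟩ := happrox h₀ hh₀ hh₀ball δ₁ hδ₁pos
  -- uniform bound on hNorm of jacobians
  have hJbound : ∀ (g : Euc n → ℝ) (u : Euc n → Euc n), Integrable g → memW1 (n:ℝ) u →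
      hNorm η g ≤ hNorm η h₀ + ENNReal.ofReal ε →
      hNorm η (g - jacDet u) < ENNReal.ofReal δ₁ →
      hNorm η (jacDet u) ≤ ENNReal.ofReal W := by
    intro g u hgint humem hgle happ
    have hJint : Integrable (jacDet u) := integrable_jacDet hn humem
    have h1 : hNorm η (jacDet u) ≤ hNorm η (fun x => jacDet u x - g x) + hNorm η g := by
      have h1a : hNorm η (jacDet u) = hNorm η (fun x => (jacDet u x - g x) + g x) :=
        hNorm_congr fun x => by ring
      rw [h1a]
      exact hNorm_add hη hηc (hJint.sub hgint) hgint
    have h2 : hNorm η (fun x => jacDet u x - g x) = hNorm η (g - jacDet u) := by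
      rw [← hNorm_neg (η := η) (g - jacDet u)]
      exact hNorm_congr fun x => by simp [Pi.sub_apply]
    rw [h2] at h1
    calc hNorm η (jacDet u)
        ≤ hNorm η (g - jacDet u) + hNorm η g := h1
      _ ≤ ENNReal.ofReal δ₁ + (hNorm η h₀ + ENNReal.ofReal ε) := add_le_add happ.le hgle
      _ = ENNReal.ofReal δ₁ + (ENNReal.ofReal ((hNorm η h₀).toReal) + ENNReal.ofReal ε) := by
          rw [ENNReal.ofReal_toReal hh₀.2.ne]
      _ ≤ ENNReal.ofReal 1 + (ENNReal.ofReal ((hNorm η h₀).toReal) + ENNReal.ofReal ε) :=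
          add_le_add_left (ENNReal.ofReal_le_ofReal hδ₁le1) _
      _ = ENNReal.ofReal (1 + ((hNorm η h₀).toReal + ε)) := by
          rw [← ENNReal.ofReal_add ENNReal.toReal_nonneg hε.le,
            ← ENNReal.ofReal_add one_pos.le (by positivity)]
      _ = ENNReal.ofReal W := by rw [hW]; ring_nf
  have hh₀le : hNorm η h₀ ≤ hNorm η h₀ + ENNReal.ofReal ε := le_self_add
  have hJ₁ : hNorm η (jacDet u₁) ≤ ENNReal.ofReal W :=
    hJbound gp u₁ hgpint hu₁mem hgpnorm hu₁app
  have hJ₂ : hNorm η (jacDet u₂) ≤ ENNReal.ofReal W :=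
    hJbound h₀ u₂ hh₀.1 hu₂mem hh₀le hu₂app
  -- w1Norm bounds
  have hwbound : ∀ u : Euc n → Euc n, memW1 (n:ℝ) u →
      hNorm η (jacDet u) ≤ ENNReal.ofReal W →
      w1Norm (n:ℝ) u ^ (n:ℝ) ≤ C * (hNorm η (jacDet u)).toReal →
      w1Norm (n:ℝ) u ≤ B := by
    intro u humem hJle hb
    have h1 : (hNorm η (jacDet u)).toReal ≤ W :=
      ENNReal.toReal_le_of_le_ofReal hWpos.le hJle
    have h2 : w1Norm (n:ℝ) u ^ (n:ℝ) ≤ C * W :=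
      le_trans hb (mul_le_mul_of_nonneg_left h1 hC.le)
    have hq0 : (n:ℝ) ≠ 0 := by positivity
    calc w1Norm (n:ℝ) u = ((w1Norm (n:ℝ) u ^ (n:ℝ)) ^ ((n:ℝ))⁻¹) := by
          rw [Real.rpow_rpow_inv (w1Norm_nonneg _ _) hq0]
      _ ≤ (C * W) ^ ((n:ℝ))⁻¹ :=
          Real.rpow_le_rpow (Real.rpow_nonneg (w1Norm_nonneg _ _) _) h2 (by positivity)
      _ ≤ B := by rw [hB]; linarith
  have hw₁ : w1Norm (n:ℝ) u₁ ≤ B := hwbound u₁ hu₁mem hJ₁ hu₁bound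
  have hw₂ : w1Norm (n:ℝ) u₂ ≤ B := hwbound u₂ hu₂mem hJ₂ hu₂bound
  -- rescaled maps
  refine ⟨t * B ^ n, fun y => B⁻¹ • u₁ y, fun y => B⁻¹ • u₂ y,
    memW1_smul _ hu₁mem, ?_, memW1_smul _ hu₂mem, ?_, by positivity, rfl, ?_, ?_, ?_⟩
  · rw [w1Norm_smul hn _ hu₁mem.1, abs_of_pos (inv_pos.2 hBpos)]
    rw [inv_mul_le_iff₀ hBpos, mul_one]
    exact hw₁
  · rw [w1Norm_smul hn _ hu₂mem.1, abs_of_pos (inv_pos.2 hBpos)]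
    rw [inv_mul_le_iff₀ hBpos, mul_one]
    exact hw₂
  · -- main error estimate
    have hBn : B ^ n * (B⁻¹) ^ n = 1 := by
      rw [← mul_pow, mul_inv_cancel₀ hBpos.ne', one_pow]
    have hkey : ∀ x, d x - ((t * B ^ n) * jacDet (fun y => B⁻¹ • u₁ y) x
        + (-(t * B ^ n)) * jacDet (fun y => B⁻¹ • u₂ y) x)
        = t * ((gp x - jacDet u₁ x) + (-(h₀ x - jacDet u₂ x))) := by
      intro x
      rw [jacDet_smul _ hu₁mem.1, jacDet_smul _ hu₂mem.1]
      have e1 : t * B ^ n * (B⁻¹ ^ n * jacDet u₁ x) = t * jacDet u₁ x := by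
        rw [← mul_assoc, mul_assoc t _ _, hBn, mul_one]
      have e2 : -(t * B ^ n) * (B⁻¹ ^ n * jacDet u₂ x) = -(t * jacDet u₂ x) := by
        rw [neg_mul, ← mul_assoc, mul_assoc t _ _, hBn, mul_one]
      rw [e1, e2]
      have e3 : t * gp x = t * h₀ x + d x := by
        rw [hgp]
        have : t * (h₀ x + t⁻¹ * d x) = t * h₀ x + t * (t⁻¹ * d x) := by ring
        rw [this, ← mul_assoc, mul_inv_cancel₀ htpos.ne', one_mul]
      have e4 : t * ((gp x - jacDet u₁ x) + (-(h₀ x - jacDet u₂ x)))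
          = t * gp x - t * h₀ x - t * jacDet u₁ x + t * jacDet u₂ x := by ring
      rw [e4, e3]
      ring
    rw [hNorm_congr hkey, hNorm_smul]
    have hin : hNorm η (fun x => (gp x - jacDet u₁ x) + (-(h₀ x - jacDet u₂ x)))
        ≤ ENNReal.ofReal δ₁ + ENNReal.ofReal δ₁ := by
      have hJ1int : Integrable (jacDet u₁) := integrable_jacDet hn hu₁mem
      have hJ2int : Integrable (jacDet u₂) := integrable_jacDet hn hu₂mem
      refine le_trans (hNorm_add hη hηc (hgpint.sub hJ1int) ((hh₀.1.sub hJ2int).neg)) ?_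
      refine add_le_add ?_ ?_
      · refine le_trans (le_of_eq (hNorm_congr fun x => ?_)) hu₁app.le
        rfl
      · refine le_trans (le_of_eq ?_) hu₂app.le
        rw [hNorm_neg (η := η) (fun x => h₀ x - jacDet u₂ x)]
        rfl
    calc ENNReal.ofReal |t| * hNorm η (fun x => (gp x - jacDet u₁ x) + (-(h₀ x - jacDet u₂ x)))
        ≤ ENNReal.ofReal t * (ENNReal.ofReal δ₁ + ENNReal.ofReal δ₁) := by
          rw [abs_of_pos htpos]
          exact mul_le_mul_right hin _
      _ = ENNReal.ofReal (t * (δ₁ + δ₁)) := by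
          rw [← ENNReal.ofReal_add hδ₁pos.le hδ₁pos.le, ← ENNReal.ofReal_mul htpos.le]
      _ ≤ ENNReal.ofReal (δ / 2) := by
          refine ENNReal.ofReal_le_ofReal ?_
          have h5 : δ₁ ≤ δ / (4 * t) := min_le_left _ _
          calc t * (δ₁ + δ₁) ≤ t * (δ / (4 * t) + δ / (4 * t)) := by
                refine mul_le_mul_of_nonneg_left (by linarith) htpos.le
            _ = δ / 2 := by field_simp; ring
      _ < ENNReal.ofReal δ :=
          ENNReal.ofReal_lt_ofReal_iff_of_nonneg (by positivity) |>.2 (by linarith)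
  · have he : ∀ x, (t * B ^ n) * jacDet (fun y => B⁻¹ • u₁ y) x = t * jacDet u₁ x := by
      intro x
      rw [jacDet_smul _ hu₁mem.1, ← mul_assoc, mul_assoc t _ _, ← mul_pow,
        mul_inv_cancel₀ hBpos.ne', one_pow, mul_one]
    rw [hNorm_congr he, hNorm_smul, abs_of_pos htpos]
    calc ENNReal.ofReal t * hNorm η (jacDet u₁)
        ≤ ENNReal.ofReal t * ENNReal.ofReal W := mul_le_mul_right hJ₁ _
      _ = ENNReal.ofReal (t * W) := by rw [← ENNReal.ofReal_mul htpos.le]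
  · have he : ∀ x, (-(t * B ^ n)) * jacDet (fun y => B⁻¹ • u₂ y) x = (-t) * jacDet u₂ x := by
      intro x
      rw [jacDet_smul _ hu₂mem.1]
      have : B ^ n * B⁻¹ ^ n = 1 := by rw [← mul_pow, mul_inv_cancel₀ hBpos.ne', one_pow]
      calc -(t * B ^ n) * (B⁻¹ ^ n * jacDet u₂ x)
          = -t * (B ^ n * B⁻¹ ^ n) * jacDet u₂ x := by ring
        _ = -t * jacDet u₂ x := by rw [this, mul_one]
    rw [hNorm_congr he, hNorm_smul, abs_neg, abs_of_pos htpos]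
    calc ENNReal.ofReal t * hNorm η (jacDet u₂)
        ≤ ENNReal.ofReal t * ENNReal.ofReal W := mul_le_mul_right hJ₂ _
      _ = ENNReal.ofReal (t * W) := by rw [← ENNReal.ofReal_mul htpos.le]

lemma lintegral_term {n : ℕ} (a : ℝ) (f : Euc n → ℝ) :
    (∫⁻ x, ‖a * f x‖₊) = ENNReal.ofReal |a| * ∫⁻ x, ‖f x‖₊ := by
  have h1 : ∀ x, ((‖a * f x‖₊ : ℝ≥0∞)) = ENNReal.ofReal |a| * ‖f x‖₊ := by
    intro x
    rw [nnnorm_mul, ENNReal.coe_mul]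
    congr 1
    rw [← enorm_eq_nnnorm, ← ofReal_norm, Real.norm_eq_abs]
  simp_rw [h1]
  exact lintegral_const_mul' _ _ ENNReal.ofReal_ne_top

lemma sum_range_two_mul (f : ℕ → ℝ) (M : ℕ) :
    ∑ j ∈ Finset.range (2*M), f (j/2) = ∑ m ∈ Finset.range M, (f m + f m) := by
  induction M with
  | zero => simp
  | succ M ih =>
    have h2 : 2*(M+1) = (2*M + 1) + 1 := by omega
    rw [h2, Finset.sum_range_succ, Finset.sum_range_succ, ih, Finset.sum_range_succ,
      show (2*M)/2 = M from by omega, show (2*M+1)/2 = M from by omega]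
    ring


structure StM (n : ℕ) where
  lam : ℕ → ℝ
  v : ℕ → Euc n → Euc n
  cc : ℕ → Euc n → ℝ
  rho : ℕ → ℝ
  r : ℕ → ℝ

def pSum {n : ℕ} (lam : ℕ → ℝ) (v : ℕ → Euc n → Euc n) (N : ℕ) : Euc n → ℝ :=
  fun x => ∑ j ∈ Finset.range N, lam j * jacDet (v j) x

def InvSt {n : ℕ} (η : Euc n → ℝ) (F : ℕ → Set (Euc n → ℝ)) (ε W B κ : ℝ)
    (k : ℕ) (st : StM n) : Prop :=
  st.r 0 = 1 ∧
  (∀ m, m ≤ k → 0 < st.r m) ∧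
  (∀ m, m < k → st.r (m+1) = min (st.rho m) (st.r m) * κ) ∧
  (∀ m, m < k → 0 < st.rho m ∧ Integrable (st.cc m)) ∧
  (∀ m, m < k → ∀ f ∈ F m, ENNReal.ofReal (st.rho m) ≤ hNorm η (f - st.cc m)) ∧
  (∀ m, m < k → hNorm η (fun x => st.cc m x - pSum st.lam st.v (2*(m+1)) x)
      < ENNReal.ofReal (st.r (m+1))) ∧
  (∀ j, j < 2*k → memW1 (n:ℝ) (st.v j) ∧ w1Norm (n:ℝ) (st.v j) ≤ 1 ∧
      |st.lam j| ≤ 2 * B ^ n / ε * st.r (j/2) ∧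
      hNorm η (fun x => st.lam j * jacDet (st.v j) x)
        ≤ ENNReal.ofReal (2 * W / ε * st.r (j/2)))

lemma pSum_memH1 {n : ℕ} (hn : 2 ≤ n) {η : Euc n → ℝ}
    (hη : Continuous η) (hηc : HasCompactSupport η)
    {lam : ℕ → ℝ} {v : ℕ → Euc n → Euc n} {N : ℕ}
    (h : ∀ j, j < N → memW1 (n:ℝ) (v j) ∧
      ∃ b : ℝ, hNorm η (fun x => lam j * jacDet (v j) x) ≤ ENNReal.ofReal b) :
    memH1 η (pSum lam v N) := by
  have hint : ∀ j ∈ Finset.range N, Integrable (fun x => lam j * jacDet (v j) x) := fun j hj =>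
    (integrable_jacDet hn (h j (Finset.mem_range.1 hj)).1).const_mul _
  refine ⟨integrable_finset_sum _ hint, ?_⟩
  refine lt_of_le_of_lt (hNorm_finsum hη hηc hint) ?_
  refine ENNReal.sum_lt_top.2 fun j hj => ?_
  obtain ⟨b, hb⟩ := (h j (Finset.mem_range.1 hj)).2
  exact lt_of_le_of_lt hb ENNReal.ofReal_lt_top

lemma step_ex {n : ℕ} (hn : 2 ≤ n) {C : ℝ} (hC : 0 < C)
    {η : Euc n → ℝ} (hη : Continuous η) (hηc : HasCompactSupport η)
    {h₀ : Euc n → ℝ} {ε : ℝ} (hε : 0 < ε) (hh₀ : memH1 η h₀)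
    (happrox : ∀ g, memH1 η g → hNorm η (g - h₀) < ENNReal.ofReal ε →
        ∀ δ : ℝ, 0 < δ → ∃ u : Euc n → Euc n, memW1 (n : ℝ) u ∧
          w1Norm (n : ℝ) u ^ (n : ℝ) ≤ C * (hNorm η (jacDet u)).toReal ∧
          hNorm η (g - jacDet u) < ENNReal.ofReal δ)
    {W B : ℝ} (hW : W = (hNorm η h₀).toReal + ε + 1)
    (hB : B = (C * W) ^ ((n:ℝ))⁻¹ + 1) (hWpos : 0 < W) (hBpos : 0 < B)
    {κ : ℝ} (hκpos : 0 < κ) (hκhalf : κ ≤ 1/2)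
    {F : ℕ → Set (Euc n → ℝ)} (hnwd : ∀ k, NwdH1 η (F k))
    (k : ℕ) (st : StM n) (hst : InvSt η F ε W B κ k st) :
    ∃ st' : StM n, InvSt η F ε W B κ (k+1) st' ∧
      (∀ j, j ≠ 2*k → j ≠ 2*k+1 → st'.lam j = st.lam j ∧ st'.v j = st.v j) ∧
      (∀ m, m ≠ k → st'.cc m = st.cc m ∧ st'.rho m = st.rho m) ∧
      (∀ m, m ≠ k+1 → st'.r m = st.r m) := by
  obtain ⟨I1, I2, I3, I4, I5, I6, I7⟩ := hst
  have hrk : 0 < st.r k := I2 k le_rfl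
  have hpmem : memH1 η (pSum st.lam st.v (2*k)) :=
    pSum_memH1 hn hη hηc fun j hj => ⟨(I7 j hj).1, _, (I7 j hj).2.2.2⟩
  obtain ⟨c, hcmem, hcnear, ρ, hρ, havoid⟩ :=
    hnwd k (pSum st.lam st.v (2*k)) hpmem (st.r k) hrk
  set rnew : ℝ := min ρ (st.r k) * κ with hrnew
  have hrnewpos : 0 < rnew := mul_pos (lt_min hρ hrk) hκpos
  have hrnewle : rnew ≤ st.r k := by
    calc rnew ≤ st.r k * κ :=
          mul_le_mul_of_nonneg_right (min_le_right _ _) hκpos.le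
      _ ≤ st.r k * 1 := mul_le_mul_of_nonneg_left (by linarith) hrk.le
      _ = st.r k := mul_one _
  have hdeq : hNorm η (fun x => c x - pSum st.lam st.v (2*k) x)
      = hNorm η (c - pSum st.lam st.v (2*k)) := hNorm_congr fun x => rfl
  have hdmem : memH1 η (fun x => c x - pSum st.lam st.v (2*k) x) := by
    refine ⟨hcmem.1.sub hpmem.1, ?_⟩
    rw [hdeq]
    exact lt_trans hcnear ENNReal.ofReal_lt_top
  obtain ⟨a, v₁, v₂, hv₁m, hv₁n, hv₂m, hv₂n, hapos, haeq, herr, hs₁, hs₂⟩ :=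
    two_lemma hn hC hη hηc hε hh₀ happrox hW hB
      (fun x => c x - pSum st.lam st.v (2*k) x) hdmem rnew hrnewpos
  have hdle : (hNorm η (fun x => c x - pSum st.lam st.v (2*k) x)).toReal ≤ st.r k := by
    refine ENNReal.toReal_le_of_le_ofReal hrk.le ?_
    rw [hdeq]; exact hcnear.le
  set T : ℝ := ((hNorm η (fun x => c x - pSum st.lam st.v (2*k) x)).toReal + rnew) / ε with hT
  have hTpos : 0 < T := by
    rw [hT]; positivity
  have hTle : T ≤ 2 * st.r k / ε := by
    rw [hT]
    gcongr
    linarith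
  refine ⟨⟨Function.update (Function.update st.lam (2*k) a) (2*k+1) (-a),
    Function.update (Function.update st.v (2*k) v₁) (2*k+1) v₂,
    Function.update st.cc k c, Function.update st.rho k ρ,
    Function.update st.r (k+1) rnew⟩, ⟨?_, ?_, ?_, ?_, ?_, ?_, ?_⟩, ?_, ?_, ?_⟩
  · simpa [Function.update_of_ne (Nat.succ_ne_zero k).symm] using I1
  · intro m hm
    rcases Nat.lt_or_ge m (k+1) with h | h
    · simp only [Function.update_of_ne (by omega : m ≠ k+1)]
      exact I2 m (by omega)
    · have : m = k+1 := by omega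
      subst this
      simpa using hrnewpos
  · intro m hm
    rcases Nat.lt_or_ge m k with h | h
    · simp only [Function.update_of_ne (by omega : m + 1 ≠ k+1),
        Function.update_of_ne (by omega : m ≠ k), Function.update_of_ne (by omega : m ≠ k+1)]
      exact I3 m h
    · have : m = k := by omega
      subst this
      simp [Function.update_of_ne (by omega : m ≠ m+1), hrnew]
  · intro m hm
    rcases Nat.lt_or_ge m k with h | h
    · constructor
      · simpa [Function.update_of_ne (by omega : m ≠ k)] using (I4 m h).1
      · show Integrable (Function.update st.cc k c m) volume
        rw [Function.update_of_ne (by omega : m ≠ k)]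
        exact (I4 m h).2
    · have : m = k := by omega
      subst this
      constructor
      · simpa using hρ
      · show Integrable (Function.update st.cc m c m) volume
        rw [Function.update_self]
        exact hcmem.1
  · intro m hm
    rcases Nat.lt_or_ge m k with h | h
    · simp only [Function.update_of_ne (by omega : m ≠ k)]
      exact I5 m h
    · have : m = k := by omega
      subst this
      simpa using havoid
  · intro m hm
    have hps : ∀ N, N ≤ 2*k → pSum (Function.update (Function.update st.lam (2*k) a) (2*k+1) (-a))
        (Function.update (Function.update st.v (2*k) v₁) (2*k+1) v₂) N
        = pSum st.lam st.v N := by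
      intro N hN
      funext x
      refine Finset.sum_congr rfl fun j hj => ?_
      have hj' : j < N := Finset.mem_range.1 hj
      rw [Function.update_of_ne (by omega : j ≠ 2*k+1), Function.update_of_ne (by omega : j ≠ 2*k),
        Function.update_of_ne (by omega : j ≠ 2*k+1), Function.update_of_ne (by omega : j ≠ 2*k)]
    rcases Nat.lt_or_ge m k with h | h
    · simp only [Function.update_of_ne (by omega : m ≠ k),
        Function.update_of_ne (by omega : m + 1 ≠ k+1)]
      rw [show (2*(m+1)) = 2*(m+1) from rfl, hps (2*(m+1)) (by omega)]
      exact I6 m h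
    · have : m = k := by omega
      subst this
      simp only [Function.update_self]
      have hexp : ∀ x, pSum (Function.update (Function.update st.lam (2*m) a) (2*m+1) (-a))
          (Function.update (Function.update st.v (2*m) v₁) (2*m+1) v₂) (2*(m+1)) x
          = pSum st.lam st.v (2*m) x + (a * jacDet v₁ x + (-a) * jacDet v₂ x) := by
        intro x
        have h2 : 2*(m+1) = (2*m + 1) + 1 := by omega
        rw [h2]
        unfold pSum
        rw [Finset.sum_range_succ, Finset.sum_range_succ]
        have e1 : Function.update (Function.update st.lam (2*m) a) (2*m+1) (-a) (2*m) = a := by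
          rw [Function.update_of_ne (by omega : 2*m ≠ 2*m+1), Function.update_self]
        have e2 : Function.update (Function.update st.lam (2*m) a) (2*m+1) (-a) (2*m+1) = -a :=
          Function.update_self _ _ _
        have e3 : Function.update (Function.update st.v (2*m) v₁) (2*m+1) v₂ (2*m) = v₁ := by
          rw [Function.update_of_ne (by omega : 2*m ≠ 2*m+1), Function.update_self]
        have e4 : Function.update (Function.update st.v (2*m) v₁) (2*m+1) v₂ (2*m+1) = v₂ :=
          Function.update_self _ _ _
        rw [e1, e2, e3, e4]
        have e5 : ∑ j ∈ Finset.range (2*m), Function.update (Function.update st.lam (2*m) a)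
            (2*m+1) (-a) j * jacDet (Function.update (Function.update st.v (2*m) v₁)
            (2*m+1) v₂ j) x = ∑ j ∈ Finset.range (2*m), st.lam j * jacDet (st.v j) x := by
          refine Finset.sum_congr rfl fun j hj => ?_
          have hj' : j < 2*m := Finset.mem_range.1 hj
          rw [Function.update_of_ne (by omega : j ≠ 2*m+1), Function.update_of_ne (by omega : j ≠ 2*m),
            Function.update_of_ne (by omega : j ≠ 2*m+1), Function.update_of_ne (by omega : j ≠ 2*m)]
        rw [e5]
        ring
      have hfin : hNorm η (fun x => c x - (pSum st.lam st.v (2*m) x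
          + (a * jacDet v₁ x + (-a) * jacDet v₂ x))) < ENNReal.ofReal rnew := by
        refine lt_of_le_of_lt (le_of_eq (hNorm_congr fun x => ?_)) herr
        ring
      refine lt_of_le_of_lt (le_of_eq (hNorm_congr fun x => ?_)) hfin
      rw [hexp x]
  · intro j hj
    rcases Nat.lt_or_ge j (2*k) with h | h
    · have e1 : Function.update (Function.update st.lam (2*k) a) (2*k+1) (-a) j = st.lam j := by
        rw [Function.update_of_ne (by omega), Function.update_of_ne (by omega)]
      have e2 : Function.update (Function.update st.v (2*k) v₁) (2*k+1) v₂ j = st.v j := by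
        rw [Function.update_of_ne (by omega), Function.update_of_ne (by omega)]
      have e3 : Function.update st.r (k+1) rnew (j/2) = st.r (j/2) := by
        rw [Function.update_of_ne (by omega)]
      simp only [e1, e2, e3]
      exact I7 j h
    · have hTW : T * W ≤ 2 * W / ε * st.r k := by
        calc T * W ≤ (2 * st.r k / ε) * W := mul_le_mul_of_nonneg_right hTle hWpos.le
          _ = 2 * W / ε * st.r k := by ring
      have hTB : T * B ^ n ≤ 2 * B ^ n / ε * st.r k := by
        calc T * B ^ n ≤ (2 * st.r k / ε) * B ^ n :=
              mul_le_mul_of_nonneg_right hTle (pow_nonneg hBpos.le n)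
          _ = 2 * B ^ n / ε * st.r k := by ring
      rcases Nat.lt_or_ge j (2*k+1) with h2 | h2
      · have : j = 2*k := by omega
        subst this
        have e1 : Function.update (Function.update st.lam (2*k) a) (2*k+1) (-a) (2*k) = a := by
          rw [Function.update_of_ne (by omega : 2*k ≠ 2*k+1), Function.update_self]
        have e2 : Function.update (Function.update st.v (2*k) v₁) (2*k+1) v₂ (2*k) = v₁ := by
          rw [Function.update_of_ne (by omega : 2*k ≠ 2*k+1), Function.update_self]
        have e3 : Function.update st.r (k+1) rnew (2*k/2) = st.r k := by
          rw [show 2*k/2 = k from by omega, Function.update_of_ne (by omega)]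
        simp only [e1, e2, e3]
        refine ⟨hv₁m, hv₁n, ?_, ?_⟩
        · rw [abs_of_pos hapos, haeq]
          exact hTB
        · exact le_trans hs₁ (ENNReal.ofReal_le_ofReal hTW)
      · have : j = 2*k+1 := by omega
        subst this
        have e1 : Function.update (Function.update st.lam (2*k) a) (2*k+1) (-a) (2*k+1) = -a :=
          Function.update_self _ _ _
        have e2 : Function.update (Function.update st.v (2*k) v₁) (2*k+1) v₂ (2*k+1) = v₂ :=
          Function.update_self _ _ _
        have e3 : Function.update st.r (k+1) rnew ((2*k+1)/2) = st.r k := by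
          rw [show (2*k+1)/2 = k from by omega, Function.update_of_ne (by omega)]
        simp only [e1, e2, e3]
        refine ⟨hv₂m, hv₂n, ?_, ?_⟩
        · rw [abs_neg, abs_of_pos hapos, haeq]
          exact hTB
        · exact le_trans hs₂ (ENNReal.ofReal_le_ofReal hTW)
  · intro j hj1 hj2
    constructor
    · show Function.update (Function.update st.lam (2*k) a) (2*k+1) (-a) j = st.lam j
      rw [Function.update_of_ne hj2, Function.update_of_ne hj1]
    · show Function.update (Function.update st.v (2*k) v₁) (2*k+1) v₂ j = st.v j
      rw [Function.update_of_ne hj2, Function.update_of_ne hj1]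
  · intro m hm
    exact ⟨Function.update_of_ne hm _ _, Function.update_of_ne hm _ _⟩
  · intro m hm
    exact Function.update_of_ne hm _ _

end AuxAll

theorem stmt7 (n : ℕ) (hn : 2 ≤ n) (C : ℝ) (hC : 0 < C)
    (η : Euc n → ℝ) (hη : ContDiff ℝ (⊤ : ℕ∞) η) (hηc : HasCompactSupport η)
    (hηint : (∫ x, η x) ≠ 0)
    -- the closure (in `H¹`) of `{Ju : ‖u‖_{W^{1,n}}ⁿ ≤ C ‖Ju‖_{H¹}}` contains a ball:
    (hball : ∃ (h₀ : Euc n → ℝ) (ε : ℝ), 0 < ε ∧ memH1 η h₀ ∧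
      ∀ g, memH1 η g → hNorm η (g - h₀) < ENNReal.ofReal ε →
        ∀ δ : ℝ, 0 < δ → ∃ u : Euc n → Euc n, memW1 (n : ℝ) u ∧
          w1Norm (n : ℝ) u ^ (n : ℝ) ≤ C * (hNorm η (jacDet u)).toReal ∧
          hNorm η (g - jacDet u) < ENNReal.ofReal δ) :
    SecondCategoryH1 η {h | memH1 η h ∧
      ∃ (lam : ℕ → ℝ) (u : ℕ → Euc n → Euc n),
        (∀ j, memW1 (n : ℝ) (u j) ∧ w1Norm (n : ℝ) (u j) ≤ 1) ∧
        Summable (fun j => |lam j|) ∧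
        Tendsto (fun N => hNorm η
            (fun x => h x - ∑ j ∈ Finset.range N, lam j * jacDet (u j) x))
          atTop (𝓝 0)} := by
  rintro ⟨F, hcover, hFmem, hnwd⟩
  obtain ⟨h₀, ε, hε, hh₀, happrox⟩ := hball
  set W : ℝ := (hNorm η h₀).toReal + ε + 1 with hW
  set B : ℝ := (C * W) ^ ((n:ℝ))⁻¹ + 1 with hB
  have hWpos : 0 < W := by rw [hW]; positivity
  have hBpos : 0 < B := by rw [hB]; positivity
  set κ : ℝ := min (1/2) (ε / (2 * (8*W + ε))) with hκ
  have hκpos : 0 < κ := lt_min (by norm_num) (by positivity)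
  have hκhalf : κ ≤ 1/2 := min_le_left _ _
  have hκkey : (8*W/ε + 1) * κ ≤ 1/2 := by
    have h1 : κ ≤ ε / (2 * (8*W + ε)) := min_le_right _ _
    have h2 : (8*W/ε + 1) = (8*W + ε)/ε := by field_simp
    rw [h2]
    calc (8*W + ε)/ε * κ ≤ (8*W + ε)/ε * (ε / (2 * (8*W + ε))) := by
          refine mul_le_mul_of_nonneg_left h1 (by positivity)
      _ = 1/2 := by field_simp
  have hηcont : Continuous η := hη.continuous
  -- the chain of states
  have hstep := step_ex hn hC hηcont hηc hε hh₀ happrox hW hB hWpos hBpos hκpos hκhalf hnwd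
  let st0 : StM n := ⟨fun _ => 0, fun _ _ => 0, fun _ _ => 0, fun _ => 1, fun _ => 1⟩
  have hst0 : InvSt η F ε W B κ 0 st0 :=
    ⟨rfl, fun _ _ => one_pos, fun m hm => absurd hm (by omega),
     fun m hm => absurd hm (by omega), fun m hm => absurd hm (by omega),
     fun m hm => absurd hm (by omega), fun j hj => absurd hj (by omega)⟩
  let chain : ∀ k : ℕ, {st : StM n // InvSt η F ε W B κ k st} := fun k =>
    Nat.rec ⟨st0, hst0⟩ (fun k ih =>
      ⟨(hstep k ih.1 ih.2).choose, (hstep k ih.1 ih.2).choose_spec.1⟩) k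
  have chain_succ : ∀ k, (chain (k+1)).1 = (hstep k (chain k).1 (chain k).2).choose :=
    fun k => rfl
  -- agreement
  have agree : ∀ k k', k ≤ k' →
      (∀ j, j < 2*k → (chain k').1.lam j = (chain k).1.lam j ∧
        (chain k').1.v j = (chain k).1.v j) ∧
      (∀ m, m < k → (chain k').1.cc m = (chain k).1.cc m ∧
        (chain k').1.rho m = (chain k).1.rho m) ∧
      (∀ m, m ≤ k → (chain k').1.r m = (chain k).1.r m) := by
    intro k k' hk
    induction k' with
    | zero =>
      have : k = 0 := by omega
      subst this
      exact ⟨fun j hj => ⟨rfl, rfl⟩, fun m hm => ⟨rfl, rfl⟩, fun m hm => rfl⟩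
    | succ k' ih =>
      rcases Nat.lt_or_ge k (k'+1) with h | h
      · have hk' : k ≤ k' := by omega
        obtain ⟨A1, A2, A3⟩ := ih hk'
        obtain ⟨_, ag1, ag2, ag3⟩ := (hstep k' (chain k').1 (chain k').2).choose_spec
        refine ⟨fun j hj => ?_, fun m hm => ?_, fun m hm => ?_⟩
        · have e := ag1 j (by omega) (by omega)
          rw [chain_succ k']
          exact ⟨e.1.trans (A1 j hj).1, e.2.trans (A1 j hj).2⟩
        · have e := ag2 m (by omega)
          rw [chain_succ k']
          exact ⟨e.1.trans (A2 m hm).1, e.2.trans (A2 m hm).2⟩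
        · have e := ag3 m (by omega)
          rw [chain_succ k']
          exact e.trans (A3 m hm)
      · have : k = k'+1 := by omega
        subst this
        exact ⟨fun j hj => ⟨rfl, rfl⟩, fun m hm => ⟨rfl, rfl⟩, fun m hm => rfl⟩
  -- limits
  set Lam : ℕ → ℝ := fun j => (chain (j+1)).1.lam j with hLam
  set V : ℕ → Euc n → Euc n := fun j => (chain (j+1)).1.v j with hV
  set CC : ℕ → Euc n → ℝ := fun m => (chain (m+1)).1.cc m with hCC
  set Rho : ℕ → ℝ := fun m => (chain (m+1)).1.rho m with hRho
  set R : ℕ → ℝ := fun m => (chain m).1.r m with hR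
  have lamEq : ∀ K j, j < 2*K → (chain K).1.lam j = Lam j ∧ (chain K).1.v j = V j := by
    intro K j hj
    rcases le_total (j+1) K with h | h
    · have e := (agree (j+1) K h).1 j (by omega)
      exact ⟨e.1, e.2⟩
    · have e := (agree K (j+1) h).1 j hj
      exact ⟨e.1.symm, e.2.symm⟩
  have rEq : ∀ K m, m ≤ K → (chain K).1.r m = R m := by
    intro K m hm
    rcases le_total m K with h | h
    · exact (agree m K h).2.2 m le_rfl
    · exact ((agree K m h).2.2 m hm).symm
  have pSumEq : ∀ K N, N ≤ 2*K → pSum (chain K).1.lam (chain K).1.v N = pSum Lam V N := by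
    intro K N hN
    funext x
    exact Finset.sum_congr rfl fun j hj => by
      have hj' := Finset.mem_range.1 hj
      rw [(lamEq K j (by omega)).1, (lamEq K j (by omega)).2]
  -- basic facts
  have hRpos : ∀ m, 0 < R m := fun m => (chain m).2.2.1 m le_rfl
  have hRrec : ∀ m, R (m+1) = min (Rho m) (R m) * κ := by
    intro m
    have e := (chain (m+1)).2.2.2.1 m (by omega)
    rw [rEq (m+1) m (by omega)] at e
    exact e
  have hRhopos : ∀ m, 0 < Rho m := fun m => ((chain (m+1)).2.2.2.2.1 m (by omega)).1
  have hCCint : ∀ m, Integrable (CC m) := fun m => ((chain (m+1)).2.2.2.2.1 m (by omega)).2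
  have havoid : ∀ m, ∀ f ∈ F m, ENNReal.ofReal (Rho m) ≤ hNorm η (f - CC m) := fun m =>
    (chain (m+1)).2.2.2.2.2.1 m (by omega)
  have hnear : ∀ m, hNorm η (fun x => CC m x - pSum Lam V (2*(m+1)) x)
      < ENNReal.ofReal (R (m+1)) := by
    intro m
    have e := (chain (m+1)).2.2.2.2.2.2.1 m (by omega)
    rw [pSumEq (m+1) (2*(m+1)) le_rfl] at e
    rw [rEq (m+1) (m+1) le_rfl] at e
    exact e
  have hterm : ∀ j, memW1 (n:ℝ) (V j) ∧ w1Norm (n:ℝ) (V j) ≤ 1 ∧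
      |Lam j| ≤ 2 * B ^ n / ε * R (j/2) ∧
      hNorm η (fun x => Lam j * jacDet (V j) x) ≤ ENNReal.ofReal (2 * W / ε * R (j/2)) := by
    intro j
    have e := (chain (j+1)).2.2.2.2.2.2.2 j (by omega)
    rw [(lamEq (j+1) j (by omega)).1, (lamEq (j+1) j (by omega)).2,
      rEq (j+1) (j/2) (by omega)] at e
    exact e
  -- geometric decay
  have hRmono : ∀ m, R (m+1) ≤ R m * κ := by
    intro m
    rw [hRrec m]
    exact mul_le_mul_of_nonneg_right (min_le_right _ _) hκpos.le
  have hRgeom : ∀ m, R m ≤ κ ^ m := by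
    intro m
    induction m with
    | zero => simp [hR, (chain 0).2.1]
    | succ m ih =>
      calc R (m+1) ≤ R m * κ := hRmono m
        _ ≤ κ ^ m * κ := mul_le_mul_of_nonneg_right ih hκpos.le
        _ = κ ^ (m+1) := by ring
  have hRshift : ∀ i m, R (i + m) ≤ R m * κ ^ i := by
    intro i m
    induction i with
    | zero => simp
    | succ i ih =>
      have : i + 1 + m = (i + m) + 1 := by omega
      rw [this]
      calc R ((i+m)+1) ≤ R (i+m) * κ := hRmono _
        _ ≤ R m * κ ^ i * κ := mul_le_mul_of_nonneg_right ih hκpos.le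
        _ = R m * κ ^ (i+1) := by ring
  -- summability of R (j/2)
  have hRhalf_sum : Summable (fun j => R (j/2)) := by
    refine summable_of_sum_range_le (c := 4) (fun j => (hRpos _).le) fun N => ?_
    calc ∑ j ∈ Finset.range N, R (j/2) ≤ ∑ j ∈ Finset.range (2*N), R (j/2) := by
          refine Finset.sum_le_sum_of_subset_of_nonneg ?_ fun j _ _ => (hRpos _).le
          exact Finset.range_subset_range.2 (by omega)
      _ = ∑ m ∈ Finset.range N, (R m + R m) := sum_range_two_mul _ _
      _ ≤ ∑ m ∈ Finset.range N, (κ ^ m + κ ^ m) := by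
          refine Finset.sum_le_sum fun m _ => ?_
          have := hRgeom m
          linarith
      _ = 2 * ∑ m ∈ Finset.range N, κ ^ m := by rw [Finset.mul_sum]; congr 1; funext m; ring
      _ ≤ 2 * 2 := by
          refine mul_le_mul_of_nonneg_left ?_ (by norm_num)
          calc ∑ m ∈ Finset.range N, κ ^ m ≤ ∑' m, κ ^ m :=
                Summable.sum_le_tsum _ (fun m _ => pow_nonneg hκpos.le m)
                  (summable_geometric_of_lt_one hκpos.le (by linarith))
            _ = (1 - κ)⁻¹ := tsum_geometric_of_lt_one hκpos.le (by linarith)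
            _ ≤ 2 := by
                rw [inv_le_comm₀ (by linarith) (by norm_num)]
                linarith
      _ = 4 := by norm_num
  -- apply master
  set wseq : ℕ → Euc n → ℝ := fun j x => Lam j * jacDet (V j) x with hwseq
  have hwint : ∀ j, Integrable (wseq j) := fun j =>
    (integrable_jacDet hn (hterm j).1).const_mul _
  set cseq : ℕ → ℝ := fun j => (2 * B ^ n / ε * R (j/2)) * (n.factorial : ℝ) with hcseq
  set βseq : ℕ → ℝ := fun j => 2 * W / ε * R (j/2) with hβseq
  have hc0 : ∀ j, 0 ≤ cseq j := fun j => by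
    have h1 := (hRpos (j/2)).le
    rw [hcseq]
    positivity
  have hβ0 : ∀ j, 0 ≤ βseq j := fun j => by
    have h1 := (hRpos (j/2)).le
    rw [hβseq]
    positivity
  have hcI : ∀ j, (∫⁻ x, ‖wseq j x‖₊) ≤ ENNReal.ofReal (cseq j) := by
    intro j
    have h1 := (hRpos (j/2)).le
    have e1 : (∫⁻ x, ‖wseq j x‖₊) = ENNReal.ofReal |Lam j| * ∫⁻ x, ‖jacDet (V j) x‖₊ :=
      lintegral_term _ _
    rw [e1]
    calc ENNReal.ofReal |Lam j| * ∫⁻ x, ‖jacDet (V j) x‖₊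
        ≤ ENNReal.ofReal (2 * B ^ n / ε * R (j/2)) * ENNReal.ofReal (n.factorial : ℝ) :=
          mul_le_mul' (ENNReal.ofReal_le_ofReal (hterm j).2.2.1)
            (lintegral_jacDet hn (hterm j).1 (hterm j).2.1)
      _ = ENNReal.ofReal (cseq j) := by
          rw [← ENNReal.ofReal_mul (by positivity)]
  have hβI : ∀ j, hNorm η (wseq j) ≤ ENNReal.ofReal (βseq j) := fun j => (hterm j).2.2.2
  have hcs : Summable cseq := (hRhalf_sum.mul_left _).mul_right _
  have hβs : Summable βseq := hRhalf_sum.mul_left _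
  obtain ⟨hhint, htail⟩ := master hηcont hηc hwint hc0 hβ0 hcI hβI hcs hβs
  set hfun : Euc n → ℝ := fun x => ∑' j, wseq j x with hhfun
  -- geometric sum of κ^(j/2)
  have hgeo2 : Summable (fun j : ℕ => κ ^ (j/2)) ∧ (∑' j : ℕ, κ ^ (j/2)) ≤ 4 := by
    have hbdd : ∀ N, ∑ j ∈ Finset.range N, κ ^ (j/2) ≤ 4 := by
      intro N
      calc ∑ j ∈ Finset.range N, κ ^ (j/2) ≤ ∑ j ∈ Finset.range (2*N), κ ^ (j/2) :=
            Finset.sum_le_sum_of_subset_of_nonneg (Finset.range_subset_range.2 (by omega))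
              fun j _ _ => pow_nonneg hκpos.le _
        _ = ∑ m' ∈ Finset.range N, (κ ^ m' + κ ^ m') := sum_range_two_mul _ _
        _ = 2 * ∑ m' ∈ Finset.range N, κ ^ m' := by
            rw [Finset.mul_sum]; exact Finset.sum_congr rfl fun m' _ => by ring
        _ ≤ 2 * 2 := by
            refine mul_le_mul_of_nonneg_left ?_ (by norm_num)
            calc ∑ m' ∈ Finset.range N, κ ^ m' ≤ ∑' m', κ ^ m' :=
                  Summable.sum_le_tsum _ (fun m' _ => pow_nonneg hκpos.le m')
                    (summable_geometric_of_lt_one hκpos.le (by linarith))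
              _ = (1 - κ)⁻¹ := tsum_geometric_of_lt_one hκpos.le (by linarith)
              _ ≤ 2 := by
                  rw [inv_le_comm₀ (by linarith) (by norm_num)]
                  linarith
        _ = 4 := by norm_num
    have hsum : Summable (fun j : ℕ => κ ^ (j/2)) :=
      summable_of_sum_range_le (fun j => pow_nonneg hκpos.le _) hbdd
    exact ⟨hsum, Summable.tsum_le_of_sum_range_le hsum hbdd⟩
  -- numeric tail bound
  have htailnum : ∀ m : ℕ, (∑' j, βseq (j + 2*(m+1))) ≤ 8 * W / ε * R (m+1) := by
    intro m
    have hβs' : Summable (fun j => βseq (j + 2*(m+1))) := (summable_nat_add_iff _).2 hβs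
    have hRm1 := (hRpos (m+1)).le
    calc (∑' j, βseq (j + 2*(m+1)))
        ≤ ∑' j, (2*W/ε * R (m+1)) * κ ^ (j/2) := by
          refine Summable.tsum_le_tsum (fun j => ?_) hβs' (hgeo2.1.mul_left _)
          show βseq (j + 2*(m+1)) ≤ _
          rw [hβseq]
          have hidx : (j + 2*(m+1))/2 = j/2 + (m+1) := by omega
          simp only []
          rw [hidx]
          calc 2*W/ε * R (j/2 + (m+1)) ≤ 2*W/ε * (R (m+1) * κ ^ (j/2)) :=
                mul_le_mul_of_nonneg_left (hRshift (j/2) (m+1)) (by positivity)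
            _ = (2*W/ε * R (m+1)) * κ ^ (j/2) := by ring
      _ = (2*W/ε * R (m+1)) * ∑' (j : ℕ), κ ^ (j/2) := tsum_mul_left
      _ ≤ (2*W/ε * R (m+1)) * 4 := by
          refine mul_le_mul_of_nonneg_left hgeo2.2 (by positivity)
      _ = 8*W/ε * R (m+1) := by ring
  -- membership of hfun in S
  have hmem : memH1 η hfun ∧
      ∃ (lam : ℕ → ℝ) (u : ℕ → Euc n → Euc n),
        (∀ j, memW1 (n : ℝ) (u j) ∧ w1Norm (n : ℝ) (u j) ≤ 1) ∧
        Summable (fun j => |lam j|) ∧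
        Tendsto (fun N => hNorm η
            (fun x => hfun x - ∑ j ∈ Finset.range N, lam j * jacDet (u j) x))
          atTop (𝓝 0) := by
    have hhnormfin : hNorm η hfun < ⊤ := by
      have h0 := htail 0
      simp only [Finset.range_zero, Finset.sum_empty, sub_zero] at h0
      exact lt_of_le_of_lt h0 ENNReal.ofReal_lt_top
    refine ⟨⟨hhint, hhnormfin⟩, Lam, V, fun j => ⟨(hterm j).1, (hterm j).2.1⟩, ?_, ?_⟩
    · refine Summable.of_nonneg_of_le (fun j => abs_nonneg _) (fun j => (hterm j).2.2.1) ?_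
      exact hRhalf_sum.mul_left _
    · have h2 : Tendsto (fun N => ENNReal.ofReal (∑' j, βseq (j + N))) atTop (𝓝 0) := by
        have h3 := tendsto_sum_nat_add βseq
        have h4 := (ENNReal.continuous_ofReal.tendsto 0).comp h3
        simpa [Function.comp_def] using h4
      refine tendsto_of_tendsto_of_tendsto_of_le_of_le tendsto_const_nhds h2
        (fun N => zero_le) fun N => htail N
  obtain ⟨m, hmF⟩ := Set.mem_iUnion.1 (hcover hmem)
  have hlow := havoid m hfun hmF
  have hR' : R (m+1) ≤ Rho m * κ := by
    rw [hRrec]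
    exact mul_le_mul_of_nonneg_right (min_le_left _ _) hκpos.le
  have hfinal : 8*W/ε * R (m+1) + R (m+1) ≤ Rho m := by
    have h8 : (0:ℝ) ≤ 8*W/ε + 1 := by positivity
    calc 8*W/ε * R (m+1) + R (m+1) = (8*W/ε + 1) * R (m+1) := by ring
      _ ≤ (8*W/ε + 1) * (Rho m * κ) := mul_le_mul_of_nonneg_left hR' h8
      _ = ((8*W/ε + 1) * κ) * Rho m := by ring
      _ ≤ (1/2) * Rho m := mul_le_mul_of_nonneg_right hκkey (hRhopos m).le
      _ ≤ Rho m := by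
          have := hRhopos m
          linarith
  have hup : hNorm η (hfun - CC m) < ENNReal.ofReal (Rho m) := by
    set N := 2*(m+1) with hN
    have hpint : Integrable (pSum Lam V N) := integrable_finset_sum _ fun j _ => hwint j
    have i1 : Integrable (fun x => hfun x - pSum Lam V N x) := hhint.sub hpint
    have i2 : Integrable (fun x => pSum Lam V N x - CC m x) := hpint.sub (hCCint m)
    have e1 : hNorm η (hfun - CC m)
        = hNorm η (fun x => (hfun x - pSum Lam V N x) + (pSum Lam V N x - CC m x)) :=
      hNorm_congr fun x => by show hfun x - CC m x = _; ring
    rw [e1]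
    refine lt_of_le_of_lt (hNorm_add hηcont hηc i1 i2) ?_
    have t1 : hNorm η (fun x => hfun x - pSum Lam V N x)
        ≤ ENNReal.ofReal (8*W/ε * R (m+1)) := by
      refine le_trans (le_of_eq (hNorm_congr fun x => rfl)) ?_
      refine le_trans (htail N) (ENNReal.ofReal_le_ofReal ?_)
      exact htailnum m
    have t2 : hNorm η (fun x => pSum Lam V N x - CC m x) < ENNReal.ofReal (R (m+1)) := by
      calc hNorm η (fun x => pSum Lam V N x - CC m x)
          = hNorm η (fun x => -(CC m x - pSum Lam V N x)) := hNorm_congr fun x => by ring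
        _ = hNorm η (fun x => CC m x - pSum Lam V N x) := hNorm_neg _
        _ < ENNReal.ofReal (R (m+1)) := hnear m
    calc hNorm η (fun x => hfun x - pSum Lam V N x)
          + hNorm η (fun x => pSum Lam V N x - CC m x)
        ≤ ENNReal.ofReal (8*W/ε * R (m+1))
          + hNorm η (fun x => pSum Lam V N x - CC m x) := add_le_add_left t1 _
      _ < ENNReal.ofReal (8*W/ε * R (m+1)) + ENNReal.ofReal (R (m+1)) :=
          ENNReal.add_lt_add_left ENNReal.ofReal_ne_top t2
      _ = ENNReal.ofReal (8*W/ε * R (m+1) + R (m+1)) :=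
          (ENNReal.ofReal_add (mul_nonneg (by positivity) (hRpos _).le) (hRpos _).le).symm
      _ ≤ ENNReal.ofReal (Rho m) := ENNReal.ofReal_le_ofReal hfinal
  exact absurd hlow (not_le.2 hup)
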